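/- Let C be an F_2F_4-additive code such that C_X is a binary self-orthogonal code and C_Y is not an ACD code over F_4. Then C is not an ACD code. -/

import Mathlib

abbrev F4 : Type := GaloisField 2 2

/-- The inner product `⟨u,v⟩₄ = ω·Σ aᵢcᵢ + Σ bⱼdⱼ` on `F_2^α × F_4^β`. -/
noncomputable def inner4 {α β : ℕ} (ω : F4)
    (u v : (Fin α → ZMod 2) × (Fin β → F4)) : F4 :=
  ω * ∑ i, algebraMap (ZMod 2) F4 (u.1 i * v.1 i) + ∑ j, u.2 j * v.2 j

theorem inner4_eq_zero {α β : ℕ} (ω : F4) {u v : (Fin α → ZMod 2) × (Fin β → F4)}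
    (hX : ∑ i, u.1 i * v.1 i = 0) (hY : ∑ j, u.2 j * v.2 j = 0) :
    inner4 ω u v = 0 := by
  rw [inner4, ← map_sum, hX, hY, map_zero, mul_zero, add_zero]

theorem stmt_14_general (α β : ℕ) (ω : F4)
    (C : AddSubgroup ((Fin α → ZMod 2) × (Fin β → F4)))
    (hXso : ∀ a a' : Fin α → ZMod 2, (∃ b, (a, b) ∈ C) → (∃ b', (a', b') ∈ C) →
      ∑ i, a i * a' i = 0)
    (hYnotacd : ∃ b : Fin β → F4, b ≠ 0 ∧ (∃ a, (a, b) ∈ C) ∧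
      (∀ b' : Fin β → F4, (∃ a', (a', b') ∈ C) → ∑ j, b j * b' j = 0)) :
    ∃ x, x ≠ 0 ∧ x ∈ C ∧ (∀ u ∈ C, inner4 ω x u = 0) := by
  obtain ⟨b, hb, ⟨a, hab⟩, hb_perp⟩ := hYnotacd
  refine ⟨(a, b), fun h => hb (congrArg Prod.snd h), hab, ?_⟩
  rintro ⟨c, d⟩ hcd
  exact inner4_eq_zero ω (hXso a c ⟨b, hab⟩ ⟨d, hcd⟩) (hb_perp d ⟨c, hcd⟩)

/-- If `C_X` is a binary self-orthogonal code and `C_Y` is not an ACD code over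
`F_4`, then `C` is not an ACD code: `C ∩ C^⊥ ≠ {0}`. -/
theorem stmt_14 (α β : ℕ) (ω : F4) (hω : ω ^ 2 + ω + 1 = 0)
    (C : AddSubgroup ((Fin α → ZMod 2) × (Fin β → F4)))
    (hXso : ∀ a a' : Fin α → ZMod 2, (∃ b, (a, b) ∈ C) → (∃ b', (a', b') ∈ C) →
      ∑ i, a i * a' i = 0)
    (hYnotacd : ∃ b : Fin β → F4, b ≠ 0 ∧ (∃ a, (a, b) ∈ C) ∧
      (∀ b' : Fin β → F4, (∃ a', (a', b') ∈ C) → ∑ j, b j * b' j = 0)) :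
    ∃ x, x ≠ 0 ∧ x ∈ C ∧ (∀ u ∈ C, inner4 ω x u = 0) :=
  stmt_14_general α β ω C hXso hYnotacd
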